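/- Let p be an odd prime and let ξ = (ξ₁, 2ξ₂, ξ₃) with ξ₁ not divisible by p. Define 1_{M₂} on (ℤ/p²ℤ)³ as the indicator of the set of triples of coefficients of β w(v+δw)² (that is, (β, 2βδ, βδ²)) for β ∈ (ℤ/p²ℤ)^× and δ ∈ ℤ/p²ℤ. Then the discrete Fourier transform satisfies: 1̂_{M₂}(ξ) = (p−1)/p⁴ if ξ₁ξ₃ ≡ ξ₂² (mod p²), equals −1/p⁴ if ξ₁ξ₃ ≡ ξ₂² (mod p) but not mod p², and equals 0 if ξ₁ξ₃ ≢ ξ₂² (mod p). -/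

import Mathlib

open Finset Classical

/-- The discrete Fourier transform on `(ℤ/nℤ)³` with respect to the pairing
`[x, ξ'] = x₁ξ₃' − (1/2) x₂ξ₂' + x₃ξ₁'`, where the dual vector `ξ' = (ξ₁, 2ξ₂, ξ₃)` has
even middle coordinate and is recorded as `ξ = (ξ₁, ξ₂, ξ₃)`; the normalization is
`n^{-3}` (that is, `p^{-6}` when `n = p²`). -/
noncomputable def dft3 (n : ℕ) [NeZero n] (f : ZMod n × ZMod n × ZMod n → ℂ)
    (ξ : ZMod n × ZMod n × ZMod n) : ℂ :=
  ((n : ℂ) ^ 3)⁻¹ * ∑ x : ZMod n × ZMod n × ZMod n,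
    f x * Complex.exp (2 * Real.pi * Complex.I *
      (((x.1 * ξ.2.2 - x.2.1 * ξ.2.1 + x.2.2 * ξ.1 : ZMod n).val : ℂ) / (n : ℂ)))

section Aux

open ZMod

lemma psi_eq_one_iff {N : ℕ} [NeZero N] (a : ZMod N) :
    stdAddChar a = 1 ↔ a = 0 := by
  constructor
  · intro h
    have h1 : toCircle a = toCircle (0 : ZMod N) := by
      apply Subtype.ext
      rw [← stdAddChar_apply, ← stdAddChar_apply, h, AddChar.map_zero_eq_one]
    exact injective_toCircle h1
  · rintro rfl; exact AddChar.map_zero_eq_one _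

variable (p : ℕ) [hp : Fact (Nat.Prime p)]

lemma pmul_eq_zero_iff (x : ZMod (p ^ 2)) :
    (p : ZMod (p ^ 2)) * x = 0 ↔ p ∣ x.val := by
  have h1 : (p : ZMod (p ^ 2)) * x = ((p * x.val : ℕ) : ZMod (p ^ 2)) := by
    rw [Nat.cast_mul, natCast_zmod_val]
  rw [h1, natCast_eq_zero_iff]
  obtain ⟨k, hk⟩ : ∃ k, x.val = k := ⟨_, rfl⟩
  rw [hk, pow_two]
  exact mul_dvd_mul_iff_left (Nat.Prime.ne_zero hp.out)

lemma sumB (c : ZMod (p ^ 2)) :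
    ∑ v : ZMod p, stdAddChar ((p : ZMod (p ^ 2)) * c * ((v.val : ℕ) : ZMod (p ^ 2))) =
      if (p : ZMod (p ^ 2)) * c = 0 then (p : ℂ) else 0 := by
  haveI : NeZero p := ⟨hp.out.ne_zero⟩
  split_ifs with h
  · have : ∀ v : ZMod p,
        stdAddChar ((p : ZMod (p ^ 2)) * c * ((v.val : ℕ) : ZMod (p ^ 2))) = 1 := by
      intro v; rw [h, zero_mul, AddChar.map_zero_eq_one]
    simp only [this, Finset.sum_const, card_univ, ZMod.card, nsmul_eq_mul, mul_one]
  · set χ : AddChar (ZMod p) ℂ :=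
      { toFun := fun v => stdAddChar ((p : ZMod (p ^ 2)) * c * ((v.val : ℕ) : ZMod (p ^ 2)))
        map_zero_eq_one' := by
          rw [ZMod.val_zero, Nat.cast_zero, mul_zero, AddChar.map_zero_eq_one]
        map_add_eq_mul' := by
          intro a b
          rw [← AddChar.map_add_eq_mul]
          congr 1
          have h1 : ((p * ((a + b).val) : ℕ) : ZMod (p ^ 2))
              = ((p * (a.val + b.val) : ℕ) : ZMod (p ^ 2)) := by
            rw [ZMod.natCast_eq_natCast_iff, pow_two]
            have hmod : (a + b).val ≡ a.val + b.val [MOD p] := by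
              rw [val_add]; exact Nat.mod_modEq _ _
            exact hmod.mul_left' p
          push_cast at h1
          linear_combination c * h1 } with hχ
    have hχne : χ ≠ 1 := by
      intro hone
      apply h
      have h1 : χ 1 = 1 := by rw [hone]; rfl
      have h2 : ((1 : ZMod p).val : ℕ) = 1 := ZMod.val_one p
      rw [hχ] at h1
      simp only [AddChar.coe_mk, h2, Nat.cast_one, mul_one] at h1
      exact (psi_eq_one_iff _).mp h1
    have := AddChar.sum_eq_zero_of_ne_one hχne
    exact this

lemma gauss (a : ZMod (p ^ 2)) (ha : IsUnit a) (h2 : IsUnit (2 : ZMod (p ^ 2))) :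
    ∑ t : ZMod (p ^ 2), stdAddChar (a * t ^ 2) = (p : ℂ) := by
  haveI : NeZero p := ⟨hp.out.ne_zero⟩
  have hppos : 0 < p := hp.out.pos
  have hbd : ∀ (u v : ZMod p), u.val + p * v.val < p ^ 2 := by
    intro u v
    have h1 := u.val_lt
    have h2 := v.val_lt
    nlinarith
  set e : ZMod p × ZMod p → ZMod (p ^ 2) :=
    fun w => ((w.1.val + p * w.2.val : ℕ) : ZMod (p ^ 2)) with he
  have hinj : Function.Injective e := by
    rintro ⟨u, v⟩ ⟨u', v'⟩ h
    have h' : u.val + p * v.val = u'.val + p * v'.val := by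
      have := congrArg ZMod.val h
      rwa [he, val_cast_of_lt (hbd u v), val_cast_of_lt (hbd u' v')] at this
    have hu : u.val = u'.val := by
      have h1 : (u.val + p * v.val) % p = (u'.val + p * v'.val) % p := by rw [h']
      rwa [Nat.add_mul_mod_self_left, Nat.add_mul_mod_self_left,
        Nat.mod_eq_of_lt u.val_lt, Nat.mod_eq_of_lt u'.val_lt] at h1
    have hv : v.val = v'.val := by
      have : p * v.val = p * v'.val := by omega
      exact Nat.eq_of_mul_eq_mul_left hppos this
    exact Prod.ext (val_injective p hu) (val_injective p hv)
  have hbij : Function.Bijective e := by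
    rw [Fintype.bijective_iff_injective_and_card]
    refine ⟨hinj, ?_⟩
    simp [ZMod.card, pow_two]
  rw [← Function.Bijective.sum_comp hbij (fun t => stdAddChar (a * t ^ 2))]
  have hpp : (p : ZMod (p ^ 2)) * (p : ZMod (p ^ 2)) = 0 := by
    rw [← Nat.cast_mul, ← pow_two, natCast_self]
  have hterm : ∀ w : ZMod p × ZMod p,
      stdAddChar (a * (e w) ^ 2) =
        stdAddChar (a * ((w.1.val : ℕ) : ZMod (p ^ 2)) ^ 2) *
          stdAddChar ((p : ZMod (p ^ 2)) * (2 * a * ((w.1.val : ℕ) : ZMod (p ^ 2)))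
            * ((w.2.val : ℕ) : ZMod (p ^ 2))) := by
    rintro ⟨u, v⟩
    rw [← AddChar.map_add_eq_mul]
    congr 1
    have : (e (u, v)) = ((u.val : ℕ) : ZMod (p ^ 2)) + (p : ZMod (p ^ 2)) * ((v.val : ℕ) : ZMod (p ^ 2)) := by
      rw [he]; push_cast; ring
    rw [this]
    set U : ZMod (p ^ 2) := ((u.val : ℕ) : ZMod (p ^ 2))
    set V : ZMod (p ^ 2) := ((v.val : ℕ) : ZMod (p ^ 2))
    linear_combination (a * V ^ 2) * hpp
  simp only [hterm]
  rw [Fintype.sum_prod_type]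
  have hcond : ∀ u : ZMod p,
      ((p : ZMod (p ^ 2)) * (2 * a * ((u.val : ℕ) : ZMod (p ^ 2))) = 0) ↔ u = 0 := by
    intro u
    have hrw : (p : ZMod (p ^ 2)) * (2 * a * ((u.val : ℕ) : ZMod (p ^ 2)))
        = (2 * a) * ((p : ZMod (p ^ 2)) * ((u.val : ℕ) : ZMod (p ^ 2))) := by ring
    rw [hrw, (h2.mul ha).mul_right_eq_zero, pmul_eq_zero_iff,
      val_cast_of_lt (lt_of_lt_of_le u.val_lt (Nat.le_self_pow two_ne_zero p))]
    constructor
    · intro hd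
      have := Nat.eq_zero_of_dvd_of_lt hd
      rcases Nat.eq_zero_or_pos u.val with h0 | hpos
      · exact (ZMod.val_eq_zero u).mp h0
      · exact absurd (Nat.le_of_dvd hpos hd) (by have := u.val_lt; omega)
    · rintro rfl; simp
  have hsum : ∀ u : ZMod p,
      (∑ v : ZMod p, stdAddChar ((p : ZMod (p ^ 2)) * (2 * a * ((u.val : ℕ) : ZMod (p ^ 2)))
        * ((v.val : ℕ) : ZMod (p ^ 2)))) = if u = 0 then (p : ℂ) else 0 := by
    intro u
    rw [sumB p (2 * a * ((u.val : ℕ) : ZMod (p ^ 2)))]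
    simp only [hcond u]
  calc ∑ u : ZMod p, ∑ v : ZMod p,
        stdAddChar (a * ((u.val : ℕ) : ZMod (p ^ 2)) ^ 2) *
          stdAddChar ((p : ZMod (p ^ 2)) * (2 * a * ((u.val : ℕ) : ZMod (p ^ 2)))
            * ((v.val : ℕ) : ZMod (p ^ 2)))
      = ∑ u : ZMod p, stdAddChar (a * ((u.val : ℕ) : ZMod (p ^ 2)) ^ 2) *
          (if u = 0 then (p : ℂ) else 0) := by
        refine Finset.sum_congr rfl fun u _ => ?_
        rw [← Finset.mul_sum, hsum u]
    _ = (p : ℂ) := by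
        rw [Finset.sum_eq_single (0 : ZMod p)]
        · simp
        · intro b _ hb; simp [hb]
        · intro habs; exact absurd (Finset.mem_univ _) habs

lemma ramanujan (m : ZMod (p ^ 2)) :
    (∑ β : (ZMod (p ^ 2))ˣ, stdAddChar ((β : ZMod (p ^ 2)) * m)) =
      (if m = 0 then ((p : ℂ)) ^ 2 else 0) -
        (if (p : ZMod (p ^ 2)) * m = 0 then (p : ℂ) else 0) := by
  haveI : NeZero p := ⟨hp.out.ne_zero⟩
  have hppos : 0 < p := hp.out.pos
  have hall : ∑ x : ZMod (p ^ 2), stdAddChar (x * m) = if m = 0 then ((p : ℂ)) ^ 2 else 0 := by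
    rw [AddChar.sum_mulShift m (isPrimitive_stdAddChar _)]
    split_ifs <;> simp [ZMod.card]
  have hsplit : ∑ x : ZMod (p ^ 2), stdAddChar (x * m) =
      (∑ β : (ZMod (p ^ 2))ˣ, stdAddChar ((β : ZMod (p ^ 2)) * m)) +
        ∑ v : ZMod p, stdAddChar ((p : ZMod (p ^ 2)) * m * ((v.val : ℕ) : ZMod (p ^ 2))) := by
    rw [← Finset.sum_filter_add_sum_filter_not univ (fun x => IsUnit x)
      (fun x => stdAddChar (x * m))]
    congr 1
    · refine Finset.sum_nbij' (fun x => if h : IsUnit x then h.unit else 1)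
        (fun β => (β : ZMod (p ^ 2))) ?_ ?_ ?_ ?_ ?_
      · intro x _; exact Finset.mem_univ _
      · intro β _; simp [Units.isUnit]
      · intro x hx
        have hx' : IsUnit x := (Finset.mem_filter.mp hx).2
        simp only [hx', dif_pos]
        exact hx'.unit_spec
      · intro β _
        have : IsUnit ((β : ZMod (p ^ 2))) := β.isUnit
        simp only [this, dif_pos]
        exact Units.ext this.unit_spec
      · intro x hx
        have hx' : IsUnit x := (Finset.mem_filter.mp hx).2
        simp only [hx', dif_pos, hx'.unit_spec]
    · have hlt : ∀ v : ZMod p, p * v.val < p ^ 2 := by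
        intro v; have := v.val_lt; nlinarith
      refine (Finset.sum_nbij' (fun v => ((p * v.val : ℕ) : ZMod (p ^ 2)))
        (fun x => ((x.val / p : ℕ) : ZMod p)) ?_ ?_ ?_ ?_ ?_).symm
      · intro v _
        simp only [Finset.mem_filter, Finset.mem_univ, true_and]
        rw [isUnit_iff_coprime]
        intro hco
        have hd : p ∣ Nat.gcd (p * v.val) (p ^ 2) :=
          Nat.dvd_gcd (dvd_mul_right _ _) (dvd_pow_self p two_ne_zero)
        rw [hco] at hd
        exact absurd (Nat.le_of_dvd one_pos hd) (by have := hp.out.one_lt; omega)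
      · intro x _; exact Finset.mem_univ _
      · intro v _
        rw [val_cast_of_lt (hlt v), Nat.mul_div_cancel_left _ hppos, natCast_zmod_val]
      · intro x hx
        have hx' : ¬ IsUnit x := (Finset.mem_filter.mp hx).2
        have hdvd : p ∣ x.val := by
          by_contra hnd
          apply hx'
          rw [← natCast_zmod_val x, isUnit_iff_coprime]
          exact (Nat.coprime_comm.mp ((Nat.Prime.coprime_iff_not_dvd hp.out).mpr hnd)).pow_right 2
        have hq : x.val / p < p := by
          rw [Nat.div_lt_iff_lt_mul hppos, ← pow_two]
          exact x.val_lt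
        rw [val_cast_of_lt hq, Nat.mul_div_cancel' hdvd, natCast_zmod_val]
      · intro v _
        congr 1
        push_cast
        ring
  rw [hall, sumB p m] at hsplit
  linear_combination -hsplit

end Aux

/-- For an odd prime `p` and `ξ' = (ξ₁, 2ξ₂, ξ₃)` with `p ∤ ξ₁`, the discrete Fourier
transform of the indicator of `M₂ = {β(1, 2δ, δ²) : β ∈ (ℤ/p²ℤ)ˣ, δ ∈ ℤ/p²ℤ}` equals
`(p−1)/p⁴` if `ξ₁ξ₃ ≡ ξ₂² (mod p²)`, `−1/p⁴` if `ξ₁ξ₃ ≡ ξ₂² (mod p)` but not mod `p²`,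
and `0` otherwise. -/
theorem dft_indicator_M2 (p : ℕ) [Fact (Nat.Prime p)] (hodd : p ≠ 2)
    (ξ₁ ξ₂ ξ₃ : ZMod (p ^ 2)) (hξ₁ : ¬ p ∣ ξ₁.val) :
    dft3 (p ^ 2)
        (fun x => if ∃ β δ : ZMod (p ^ 2), IsUnit β ∧ x = (β, 2 * β * δ, β * δ ^ 2)
          then 1 else 0) (ξ₁, ξ₂, ξ₃) =
      if ξ₁ * ξ₃ = ξ₂ ^ 2 then ((p : ℂ) - 1) / (p : ℂ) ^ 4
      else if p ∣ (ξ₁ * ξ₃ - ξ₂ ^ 2).val then -1 / (p : ℂ) ^ 4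
      else 0 := by
  have hp : Fact (Nat.Prime p) := inferInstance
  haveI : NeZero p := ⟨hp.out.ne_zero⟩
  open ZMod in
  have hu1 : IsUnit ξ₁ := by
    rw [← ZMod.natCast_zmod_val ξ₁, ZMod.isUnit_iff_coprime]
    exact (Nat.coprime_comm.mp ((Nat.Prime.coprime_iff_not_dvd hp.out).mpr hξ₁)).pow_right 2
  have h2 : IsUnit (2 : ZMod (p ^ 2)) := by
    have h2' : ((2 : ℕ) : ZMod (p ^ 2)) = 2 := by norm_cast
    rw [← h2', ZMod.isUnit_iff_coprime]
    exact ((Nat.coprime_primes Nat.prime_two hp.out).mpr (Ne.symm hodd)).pow_right 2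
  have hinv : ξ₁ * ξ₁⁻¹ = 1 := ZMod.mul_inv_of_unit ξ₁ hu1
  set D : ZMod (p ^ 2) := ξ₃ - ξ₂ ^ 2 * ξ₁⁻¹ with hD
  have hDξ : D * ξ₁ = ξ₁ * ξ₃ - ξ₂ ^ 2 := by
    rw [hD]; linear_combination (-ξ₂ ^ 2) * hinv
  have hψ : ∀ m : ZMod (p ^ 2), Complex.exp (2 * Real.pi * Complex.I *
      ((m.val : ℂ) / ((p ^ 2 : ℕ) : ℂ))) = ZMod.stdAddChar m := by
    intro m
    rw [ZMod.stdAddChar_apply, ZMod.toCircle_apply, mul_div_assoc]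
  have hinner : ∀ β : (ZMod (p ^ 2))ˣ,
      (∑ δ : ZMod (p ^ 2), ZMod.stdAddChar
        ((β : ZMod (p ^ 2)) * (ξ₁ * δ ^ 2 - 2 * ξ₂ * δ + ξ₃)))
        = ZMod.stdAddChar ((β : ZMod (p ^ 2)) * D) * (p : ℂ) := by
    intro β
    have hsub := Equiv.sum_comp (Equiv.addRight (ξ₂ * ξ₁⁻¹))
      (fun δ => ZMod.stdAddChar ((β : ZMod (p ^ 2)) * (ξ₁ * δ ^ 2 - 2 * ξ₂ * δ + ξ₃)))
    rw [← hsub]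
    have harg : ∀ t : ZMod (p ^ 2),
        (β : ZMod (p ^ 2)) * (ξ₁ * (t + ξ₂ * ξ₁⁻¹) ^ 2 - 2 * ξ₂ * (t + ξ₂ * ξ₁⁻¹) + ξ₃)
          = ((β : ZMod (p ^ 2)) * ξ₁) * t ^ 2 + (β : ZMod (p ^ 2)) * D := by
      intro t
      rw [hD]
      linear_combination ((β : ZMod (p ^ 2)) * (2 * ξ₂ * t + ξ₂ ^ 2 * ξ₁⁻¹)) * hinv
    calc ∑ t : ZMod (p ^ 2),
          (fun δ => ZMod.stdAddChar ((β : ZMod (p ^ 2)) * (ξ₁ * δ ^ 2 - 2 * ξ₂ * δ + ξ₃)))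
            ((Equiv.addRight (ξ₂ * ξ₁⁻¹)) t)
        = ∑ t : ZMod (p ^ 2), ZMod.stdAddChar (((β : ZMod (p ^ 2)) * ξ₁) * t ^ 2) *
            ZMod.stdAddChar ((β : ZMod (p ^ 2)) * D) := by
          refine Finset.sum_congr rfl fun t _ => ?_
          simp only [Equiv.coe_addRight]
          rw [harg t, AddChar.map_add_eq_mul]
      _ = ZMod.stdAddChar ((β : ZMod (p ^ 2)) * D) * (p : ℂ) := by
          rw [← Finset.sum_mul, gauss p _ (β.isUnit.mul hu1) h2, mul_comm]
  rw [dft3]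
  simp only [hψ]
  set g : (ZMod (p ^ 2))ˣ × ZMod (p ^ 2) → ZMod (p ^ 2) × ZMod (p ^ 2) × ZMod (p ^ 2) :=
    fun bd => ((bd.1 : ZMod (p ^ 2)), 2 * (bd.1 : ZMod (p ^ 2)) * bd.2,
      (bd.1 : ZMod (p ^ 2)) * bd.2 ^ 2) with hg
  have hset : (univ.filter fun x : ZMod (p ^ 2) × ZMod (p ^ 2) × ZMod (p ^ 2) =>
      ∃ β δ : ZMod (p ^ 2), IsUnit β ∧ x = (β, 2 * β * δ, β * δ ^ 2)) = Finset.image g univ := by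
    ext x
    simp only [Finset.mem_filter, Finset.mem_univ, true_and, Finset.mem_image]
    constructor
    · rintro ⟨β, δ, hβ, rfl⟩
      exact ⟨(hβ.unit, δ), by simp [hg, hβ.unit_spec]⟩
    · rintro ⟨⟨β, δ⟩, rfl⟩
      exact ⟨(β : ZMod (p ^ 2)), δ, β.isUnit, rfl⟩
  have hginj : ∀ a ∈ (univ : Finset ((ZMod (p ^ 2))ˣ × ZMod (p ^ 2))), ∀ b ∈ univ,
      g a = g b → a = b := by
    rintro ⟨β, δ⟩ - ⟨β', δ'⟩ - h
    simp only [hg, Prod.mk.injEq] at h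
    obtain ⟨h1', h2', -⟩ := h
    have hββ : β = β' := Units.ext h1'
    subst hββ
    have hδ : δ = δ' := (h2.mul β.isUnit).mul_left_cancel h2'
    rw [hδ]
  have hbig : (∑ x : ZMod (p ^ 2) × ZMod (p ^ 2) × ZMod (p ^ 2),
      (if ∃ β δ : ZMod (p ^ 2), IsUnit β ∧ x = (β, 2 * β * δ, β * δ ^ 2) then (1 : ℂ) else 0) *
        ZMod.stdAddChar (x.1 * ξ₃ - x.2.1 * ξ₂ + x.2.2 * ξ₁))
      = ((if D = 0 then (p : ℂ) ^ 2 else 0) -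
          (if (p : ZMod (p ^ 2)) * D = 0 then (p : ℂ) else 0)) * (p : ℂ) := by
    calc (∑ x : ZMod (p ^ 2) × ZMod (p ^ 2) × ZMod (p ^ 2),
        (if ∃ β δ : ZMod (p ^ 2), IsUnit β ∧ x = (β, 2 * β * δ, β * δ ^ 2) then (1 : ℂ) else 0) *
          ZMod.stdAddChar (x.1 * ξ₃ - x.2.1 * ξ₂ + x.2.2 * ξ₁))
        = ∑ x : ZMod (p ^ 2) × ZMod (p ^ 2) × ZMod (p ^ 2),
            (if ∃ β δ : ZMod (p ^ 2), IsUnit β ∧ x = (β, 2 * β * δ, β * δ ^ 2) then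
              ZMod.stdAddChar (x.1 * ξ₃ - x.2.1 * ξ₂ + x.2.2 * ξ₁) else 0) := by
          refine Finset.sum_congr rfl fun x _ => ?_
          rw [ite_mul, one_mul, zero_mul]
      _ = ∑ x ∈ univ.filter fun x : ZMod (p ^ 2) × ZMod (p ^ 2) × ZMod (p ^ 2) =>
            ∃ β δ : ZMod (p ^ 2), IsUnit β ∧ x = (β, 2 * β * δ, β * δ ^ 2),
            ZMod.stdAddChar (x.1 * ξ₃ - x.2.1 * ξ₂ + x.2.2 * ξ₁) :=
          (Finset.sum_filter _ _).symm
      _ = ∑ bd ∈ Finset.image g univ,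
            ZMod.stdAddChar (bd.1 * ξ₃ - bd.2.1 * ξ₂ + bd.2.2 * ξ₁) := by rw [hset]
      _ = ∑ bd : (ZMod (p ^ 2))ˣ × ZMod (p ^ 2),
            ZMod.stdAddChar ((g bd).1 * ξ₃ - (g bd).2.1 * ξ₂ + (g bd).2.2 * ξ₁) :=
          Finset.sum_image hginj
      _ = ∑ β : (ZMod (p ^ 2))ˣ, ∑ δ : ZMod (p ^ 2),
            ZMod.stdAddChar ((β : ZMod (p ^ 2)) * (ξ₁ * δ ^ 2 - 2 * ξ₂ * δ + ξ₃)) := by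
          rw [Fintype.sum_prod_type]
          refine Finset.sum_congr rfl fun β _ => Finset.sum_congr rfl fun δ _ => ?_
          congr 1
          simp only [hg]
          ring
      _ = ∑ β : (ZMod (p ^ 2))ˣ, ZMod.stdAddChar ((β : ZMod (p ^ 2)) * D) * (p : ℂ) :=
          Finset.sum_congr rfl fun β _ => hinner β
      _ = (∑ β : (ZMod (p ^ 2))ˣ, ZMod.stdAddChar ((β : ZMod (p ^ 2)) * D)) * (p : ℂ) := by
          rw [Finset.sum_mul]
      _ = ((if D = 0 then (p : ℂ) ^ 2 else 0) -
            (if (p : ZMod (p ^ 2)) * D = 0 then (p : ℂ) else 0)) * (p : ℂ) := by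
          rw [ramanujan p D]
  rw [hbig]
  have hD1 : (ξ₁ * ξ₃ = ξ₂ ^ 2) ↔ D = 0 := by
    constructor
    · intro hc
      have h0 : D * ξ₁ = 0 := by rw [hDξ, hc, sub_self]
      exact (IsUnit.mul_left_eq_zero hu1).mp h0
    · intro hd
      have h0 : (0 : ZMod (p ^ 2)) = ξ₁ * ξ₃ - ξ₂ ^ 2 := by rw [← hDξ, hd, zero_mul]
      exact sub_eq_zero.mp h0.symm
  have hD2 : (p ∣ (ξ₁ * ξ₃ - ξ₂ ^ 2).val) ↔ (p : ZMod (p ^ 2)) * D = 0 := by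
    rw [← pmul_eq_zero_iff p]
    have hkey : (p : ZMod (p ^ 2)) * (ξ₁ * ξ₃ - ξ₂ ^ 2) = ((p : ZMod (p ^ 2)) * D) * ξ₁ := by
      linear_combination (p : ZMod (p ^ 2)) * hDξ + (2 * (p : ZMod (p ^ 2)) * ξ₂ ^ 2) * hinv
    rw [hkey, IsUnit.mul_left_eq_zero hu1]
  have hPne : (p : ℂ) ≠ 0 := Nat.cast_ne_zero.mpr hp.out.ne_zero
  have hcast : ((p ^ 2 : ℕ) : ℂ) = (p : ℂ) ^ 2 := by push_cast; ring
  rw [hcast]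
  by_cases hc1 : ξ₁ * ξ₃ = ξ₂ ^ 2
  · have hd : D = 0 := hD1.mp hc1
    have hd2 : (p : ZMod (p ^ 2)) * D = 0 := by rw [hd, mul_zero]
    rw [if_pos hd, if_pos hd2, if_pos hc1]
    field_simp
  · rw [if_neg (fun hh => hc1 (hD1.mpr hh)), if_neg hc1]
    by_cases hc2 : p ∣ (ξ₁ * ξ₃ - ξ₂ ^ 2).val
    · rw [if_pos (hD2.mp hc2), if_pos hc2]
      field_simp
      ring
    · rw [if_neg (fun hh => hc2 (hD2.mpr hh)), if_neg hc2]
      simp
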